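/- arXiv:1704.02881 — 2 statements merged into one kernel-verified Lean document; each statement's English description precedes it below -/
import Mathlib

section
/- For fixed n ∈ ℕ, the function q ↦ c*_q(n) is multiplicative: if gcd(q₁, q₂) = 1 then c*_{q₁q₂}(n) = c*_{q₁}(n) · c*_{q₂}(n). -/
/-! Write a residue modulo `q₁ q₂` as `a q₂ + b q₁` with `a` modulo `q₁` and `b` modulo `q₂`
(Chinese remainder theorem). The exponential factors as `e(a n / q₁) e(b n / q₂)`, and the
condition `(a q₂ + b q₁, q₁ q₂)_* = 1` splits into `(a, q₁)_* = 1` and `(b, q₂)_* = 1`: a unitary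
divisor `d` of `q₁ q₂` is the product of the unitary divisors `(d, q₁)` of `q₁` and `(d, q₂)` of
`q₂`, and a divisor of `q₁` divides `a q₂ + b q₁` exactly when it divides `a`. -/

open Complex Finset

noncomputable section

/-- Number of distinct prime factors. -/
def omega (n : ℕ) : ℕ := n.primeFactors.card

/-- The unitary gcd `(k,q)_* = max {d : d ∣ k, d ∣∣ q}`. -/
def ugcd (k q : ℕ) : ℕ :=
  ((q.divisors).filter (fun d => d ∣ k ∧ Nat.Coprime d (q / d))).sup id

/-- The set of unitary divisors of `q`. -/
def unitaryDivisors (q : ℕ) : Finset ℕ :=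
  q.divisors.filter (fun d => Nat.Coprime d (q / d))

/-- The unitary Ramanujan sum `c*_q(n)`. -/
def cstar (q n : ℕ) : ℂ :=
  ∑ k ∈ Finset.Icc 1 q,
    if ugcd k q = 1 then Complex.exp (2 * Real.pi * Complex.I * k * n / q) else 0

/-- The classical Ramanujan sum `c_q(n)`. -/
def cc (q n : ℕ) : ℂ :=
  ∑ k ∈ Finset.Icc 1 q,
    if Nat.gcd k q = 1 then Complex.exp (2 * Real.pi * Complex.I * k * n / q) else 0

theorem mem_unitaryDivisors {d q : ℕ} :
    d ∈ unitaryDivisors q ↔ (d ∣ q ∧ q ≠ 0) ∧ Nat.Coprime d (q / d) := by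
  rw [unitaryDivisors, mem_filter, Nat.mem_divisors]

theorem ugcd_eq_one_iff {k q : ℕ} (hq : q ≠ 0) :
    ugcd k q = 1 ↔ ∀ d ∈ unitaryDivisors q, d ∣ k → d = 1 := by
  constructor
  · intro h d hd hdk
    rw [mem_unitaryDivisors] at hd
    have hle : d ≤ 1 :=
      h ▸ Finset.le_sup (f := id) (mem_filter.mpr ⟨Nat.mem_divisors.mpr hd.1, hdk, hd.2⟩)
    have hd₀ : d ≠ 0 := ne_zero_of_dvd_ne_zero hq hd.1.1
    omega
  · intro h
    refine le_antisymm (Finset.sup_le fun d hd => ?_) (Finset.le_sup (f := id) (by simp [hq]))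
    rw [mem_filter] at hd
    exact (h d (mem_filter.mpr ⟨hd.1, hd.2.2⟩) hd.2.1).le

theorem ugcd_congr {k k' q : ℕ} (h : ∀ d, d ∣ q → (d ∣ k ↔ d ∣ k')) : ugcd k q = ugcd k' q := by
  unfold ugcd
  congr 1
  exact filter_congr fun d hd => by rw [h d (Nat.dvd_of_mem_divisors hd)]

theorem ugcd_mod (k q : ℕ) : ugcd (k % q) q = ugcd k q :=
  ugcd_congr fun _ hd => Nat.dvd_mod_iff hd

theorem ugcd_mul_add_mul_of_coprime {q m : ℕ} (h : Nat.Coprime q m) (a b : ℕ) :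
    ugcd (a * m + b * q) q = ugcd a q :=
  ugcd_congr fun _ hd =>
    (Nat.dvd_add_left (dvd_mul_of_dvd_right hd b)).trans (h.coprime_dvd_left hd).dvd_mul_right

theorem unitaryDivisors_subset_mul_of_coprime {q₁ q₂ : ℕ} (h : Nat.Coprime q₁ q₂) (hq₂ : q₂ ≠ 0) :
    unitaryDivisors q₁ ⊆ unitaryDivisors (q₁ * q₂) := by
  intro d hd
  rw [mem_unitaryDivisors] at hd ⊢
  obtain ⟨⟨hdq, hq₁⟩, hcop⟩ := hd
  refine ⟨⟨hdq.mul_right q₂, mul_ne_zero hq₁ hq₂⟩, ?_⟩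
  rw [← Nat.div_mul_right_comm hdq]
  exact hcop.mul_right (h.coprime_dvd_left hdq)

theorem gcd_mem_unitaryDivisors_of_coprime {d q₁ q₂ : ℕ} (h : Nat.Coprime q₁ q₂)
    (hd : d ∈ unitaryDivisors (q₁ * q₂)) : d.gcd q₁ ∈ unitaryDivisors q₁ := by
  rw [mem_unitaryDivisors] at hd ⊢
  obtain ⟨⟨hdq, hq⟩, hcop⟩ := hd
  have hsplit : d.gcd q₁ * d.gcd q₂ = d := (Nat.gcd_mul_gcd_eq_iff_dvd_mul_of_coprime h).mpr hdq
  have hquot : d * (q₁ / d.gcd q₁) = q₁ * d.gcd q₂ := by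
    nth_rw 1 [← hsplit]
    rw [mul_right_comm, Nat.mul_div_cancel' (Nat.gcd_dvd_right d q₁)]
  refine ⟨⟨Nat.gcd_dvd_right d q₁, left_ne_zero_of_mul hq⟩, ?_⟩
  refine (hcop.coprime_dvd_left (Nat.gcd_dvd_left d q₁)).coprime_dvd_right ?_
  rw [Nat.dvd_div_iff_mul_dvd hdq, hquot]
  exact mul_dvd_mul_left q₁ (Nat.gcd_dvd_right d q₂)

theorem ugcd_mul_eq_one_iff {k q₁ q₂ : ℕ} (h : Nat.Coprime q₁ q₂) (hq₁ : q₁ ≠ 0)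
    (hq₂ : q₂ ≠ 0) : ugcd k (q₁ * q₂) = 1 ↔ ugcd k q₁ = 1 ∧ ugcd k q₂ = 1 := by
  rw [ugcd_eq_one_iff (mul_ne_zero hq₁ hq₂), ugcd_eq_one_iff hq₁, ugcd_eq_one_iff hq₂]
  have hsub₁ := unitaryDivisors_subset_mul_of_coprime h hq₂
  have hsub₂ := mul_comm q₂ q₁ ▸ unitaryDivisors_subset_mul_of_coprime h.symm hq₁
  refine ⟨fun H => ⟨fun d hd => H d (hsub₁ hd), fun d hd => H d (hsub₂ hd)⟩, ?_⟩
  rintro ⟨H₁, H₂⟩ d hd hdk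
  have hd' : d ∈ unitaryDivisors (q₂ * q₁) := mul_comm q₁ q₂ ▸ hd
  rw [← (Nat.gcd_mul_gcd_eq_iff_dvd_mul_of_coprime h).mpr (mem_unitaryDivisors.mp hd).1.1,
    H₁ _ (gcd_mem_unitaryDivisors_of_coprime h hd) ((Nat.gcd_dvd_left d q₁).trans hdk),
    H₂ _ (gcd_mem_unitaryDivisors_of_coprime h.symm hd') ((Nat.gcd_dvd_left d q₂).trans hdk)]

theorem sum_Icc_one_eq_sum_range {M : Type*} [AddCommMonoid M] (f : ℕ → M) (q : ℕ)
    (hf : f q = f 0) : ∑ k ∈ Icc 1 q, f k = ∑ k ∈ range q, f k := by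
  rw [← Ico_add_one_right_eq_Icc, sum_Ico_eq_sum_range, Nat.add_sub_cancel]
  cases q with
  | zero => rfl
  | succ m =>
    rw [sum_range_succ, sum_range_succ' f]
    simp only [add_comm 1, hf]

theorem sum_range_eq_sum_zmod_val {M : Type*} [AddCommMonoid M] (f : ℕ → M) (q : ℕ) [NeZero q] :
    ∑ k ∈ range q, f k = ∑ x : ZMod q, f x.val := by
  obtain ⟨m, rfl⟩ : ∃ m, q = m + 1 := Nat.exists_eq_succ_of_ne_zero (NeZero.ne q)
  exact sum_range f

theorem exp_two_pi_I_mul_mod_div (q k n : ℕ) [NeZero q] :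
    exp (2 * Real.pi * I * ↑(k % q) * n / q) = exp (2 * Real.pi * I * k * n / q) := by
  have h : ((k % q * n : ℕ) : ZMod q) = ((k * n : ℕ) : ZMod q) := by
    rw [Nat.cast_mul, Nat.cast_mul, ZMod.natCast_mod]
  have hexp := congrArg (fun x => (ZMod.toCircle x : ℂ)) h
  simp only [ZMod.toCircle_natCast] at hexp
  simpa only [Nat.cast_mul, ← mul_assoc] using hexp

def cstarTerm (q n k : ℕ) : ℂ :=
  if ugcd k q = 1 then Complex.exp (2 * Real.pi * Complex.I * k * n / q) else 0

theorem cstarTerm_mod (q n k : ℕ) [NeZero q] : cstarTerm q n (k % q) = cstarTerm q n k := by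
  rw [cstarTerm, cstarTerm, ugcd_mod, exp_two_pi_I_mul_mod_div]

theorem cstarTerm_mul_add_mul {q₁ q₂ : ℕ} [NeZero q₁] [NeZero q₂] (h : Nat.Coprime q₁ q₂)
    (n a b : ℕ) :
    cstarTerm (q₁ * q₂) n (a * q₂ + b * q₁) = cstarTerm q₁ n a * cstarTerm q₂ n b := by
  have hq₁ : (q₁ : ℂ) ≠ 0 := Nat.cast_ne_zero.mpr (NeZero.ne q₁)
  have hq₂ : (q₂ : ℂ) ≠ 0 := Nat.cast_ne_zero.mpr (NeZero.ne q₂)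
  have hexp : exp (2 * Real.pi * I * ↑(a * q₂ + b * q₁) * n / ↑(q₁ * q₂))
      = exp (2 * Real.pi * I * a * n / q₁) * exp (2 * Real.pi * I * b * n / q₂) := by
    rw [← Complex.exp_add]
    congr 1
    push_cast
    field_simp
  have hugcd₂ : ugcd (a * q₂ + b * q₁) q₂ = ugcd b q₂ := by
    rw [add_comm, ugcd_mul_add_mul_of_coprime h.symm]
  simp only [cstarTerm, ugcd_mul_eq_one_iff h (NeZero.ne q₁) (NeZero.ne q₂),
    ugcd_mul_add_mul_of_coprime h, hugcd₂, hexp]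
  split_ifs <;> simp_all

theorem cstar_eq_sum_zmod (q n : ℕ) [NeZero q] :
    cstar q n = ∑ x : ZMod q, cstarTerm q n x.val := by
  rw [← sum_range_eq_sum_zmod_val]
  exact sum_Icc_one_eq_sum_range (cstarTerm q n) q (by rw [← cstarTerm_mod q n q, Nat.mod_self])

theorem bijective_val_mul_add_val_mul {q₁ q₂ : ℕ} [NeZero q₁] [NeZero q₂]
    (h : Nat.Coprime q₁ q₂) : Function.Bijective fun p : ZMod q₁ × ZMod q₂ =>
      ((p.1.val * q₂ + p.2.val * q₁ : ℕ) : ZMod (q₁ * q₂)) := by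
  refine (Fintype.bijective_iff_injective_and_card _).mpr ⟨fun x y hxy => ?_, by simp [ZMod.card]⟩
  have h₁ := congrArg (ZMod.castHom (dvd_mul_right q₁ q₂) (ZMod q₁)) hxy
  have h₂ := congrArg (ZMod.castHom (dvd_mul_left q₂ q₁) (ZMod q₂)) hxy
  simp only [map_natCast, Nat.cast_add, Nat.cast_mul, map_add, map_mul, ZMod.natCast_zmod_val,
    ZMod.natCast_self, mul_zero, add_zero, zero_add] at h₁ h₂
  exact Prod.ext (((ZMod.isUnit_iff_coprime q₂ q₁).mpr h.symm).mul_right_cancel h₁)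
    (((ZMod.isUnit_iff_coprime q₁ q₂).mpr h).mul_right_cancel h₂)

theorem stmt3_general (n q₁ q₂ : ℕ)
    (h : Nat.Coprime q₁ q₂) :
    cstar (q₁ * q₂) n = cstar q₁ n * cstar q₂ n := by
  -- `cstar 0 n` is the empty sum over `Icc 1 0`.
  rcases eq_or_ne q₁ 0 with rfl | hq₁
  · simp [cstar]
  rcases eq_or_ne q₂ 0 with rfl | hq₂
  · simp [cstar]
  have := NeZero.mk hq₁
  have := NeZero.mk hq₂
  rw [cstar_eq_sum_zmod, cstar_eq_sum_zmod, cstar_eq_sum_zmod, Fintype.sum_mul_sum,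
    ← Fintype.sum_prod_type', ← (bijective_val_mul_add_val_mul h).sum_comp]
  refine Fintype.sum_congr _ _ fun p => ?_
  rw [ZMod.val_natCast, cstarTerm_mod, cstarTerm_mul_add_mul h]

theorem stmt3 (n q₁ q₂ : ℕ) (hn : 1 ≤ n) (hq₁ : 1 ≤ q₁) (hq₂ : 1 ≤ q₂)
    (h : Nat.Coprime q₁ q₂) :
    cstar (q₁ * q₂) n = cstar q₁ n * cstar q₂ n :=
  stmt3_general n q₁ q₂ h
end
end

section
/- For every k ≥ 2 and n₁,…,n_k ∈ ℕ, τ(gcd(n₁,…,n_k)) = ζ(k) Σ_{q₁,…,q_k ≥ 1} c_{q₁}(n₁)⋯c_{q_k}(n_k) / Q^k, with absolute convergence, where Q = lcm(q₁,…,q_k). -/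
/-!
Both sides are iterated sums of the double series
`∑_{m ≥ 1} ∑_{q : ∀ i, q i ∣ m} (∏ i, c_{q i}(n i)) / m ^ k`.
Summing over `m` first, `∑_{lcm q ∣ m} m⁻ᵏ = ζ(k) / (lcm q) ^ k` gives the right-hand side.
Summing over `q` first, `∑_{d ∣ m} c_d(n) = m · [m ∣ n]` turns the inner sum into `[m ∣ gcd n]`,
whose sum over `m` is `τ(gcd n)`. The interchange is justified by absolute convergence:
`|c_q(n)| ≤ σ(n)` by Möbius inversion of that divisor-sum identity, each `m` carries `τ(m) ^ k`
tuples `q`, and `∑ τ(m)² / m² < ∞` because `τ² ≤ τ * τ` (Dirichlet convolution).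
-/

open Complex Finset

noncomputable section

open ArithmeticFunction LSeries
open scoped ArithmeticFunction.sigma ArithmeticFunction.zeta ArithmeticFunction.Moebius
  LSeries.notation

-- `j / m` in lowest terms is `a / d` with `d = m / gcd j m`.
lemma sum_Icc_eq_sum_divisors_sum_coprime {M : Type*} [AddCommMonoid M] (F : ℚ → M) (m : ℕ) :
    ∑ j ∈ Icc 1 m, F (j / m) =
      ∑ d ∈ m.divisors, ∑ a ∈ Icc 1 d with a.Coprime d, F (a / d) := by
  rcases eq_or_ne m 0 with rfl | hm
  · simp
  rw [← Nat.sum_div_divisors, ← Finset.sum_fiberwise_of_maps_to (t := m.divisors)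
    (g := fun j => j.gcd m) fun j _ => Nat.mem_divisors.mpr ⟨Nat.gcd_dvd_right j m, hm⟩]
  refine Finset.sum_congr rfl fun g hg => ?_
  obtain ⟨d, rfl⟩ := Nat.dvd_of_mem_divisors hg
  have hg0 : 0 < g := Nat.pos_of_ne_zero (left_ne_zero_of_mul hm)
  rw [Nat.mul_div_cancel_left d hg0]
  symm
  refine Finset.sum_nbij' (g * ·) (· / g) ?_ ?_ ?_ ?_ ?_
  · intro a ha
    simp only [mem_filter, mem_Icc] at ha ⊢
    refine ⟨⟨?_, ?_⟩, ?_⟩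
    · exact Nat.mul_pos hg0 ha.1.1
    · exact Nat.mul_le_mul_left g ha.1.2
    · rw [Nat.gcd_mul_left, ha.2, mul_one]
  · intro j hj
    simp only [mem_filter, mem_Icc] at hj ⊢
    obtain ⟨⟨hj1, hjm⟩, hgcd⟩ := hj
    obtain ⟨b, rfl⟩ : g ∣ j := hgcd ▸ Nat.gcd_dvd_left j (g * d)
    rw [Nat.gcd_mul_left, Nat.mul_eq_left hg0.ne'] at hgcd
    rw [Nat.mul_div_cancel_left b hg0]
    exact ⟨⟨Nat.pos_of_mul_pos_left hj1, Nat.le_of_mul_le_mul_left hjm hg0⟩, hgcd⟩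
  · intro a _
    exact Nat.mul_div_cancel_left a hg0
  · intro j hj
    simp only [mem_filter, mem_Icc] at hj
    exact Nat.mul_div_cancel' (hj.2 ▸ Nat.gcd_dvd_left j (g * d))
  · intro a _
    congr 1
    push_cast
    field_simp

lemma sum_Icc_exp_eq_ite {m : ℕ} (hm : m ≠ 0) (n : ℕ) :
    ∑ j ∈ Icc 1 m, exp (2 * Real.pi * I * j * n / m) = if m ∣ n then (m : ℂ) else 0 := by
  set z := exp (2 * Real.pi * I / m) ^ n
  have hζ : IsPrimitiveRoot (exp (2 * Real.pi * I / m)) m := Complex.isPrimitiveRoot_exp m hm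
  have hzm : z ^ m = 1 := by rw [pow_right_comm, hζ.pow_eq_one, one_pow]
  have hterm : ∀ j : ℕ, exp (2 * Real.pi * I * j * n / m) = z ^ j := by
    intro j
    rw [← pow_mul, ← exp_nat_mul]
    congr 1
    push_cast
    ring
  simp_rw [hterm]
  split_ifs with h
  · simp [z, (hζ.pow_eq_one_iff_dvd n).mpr h]
  · have hz : z ≠ 1 := mt (hζ.pow_eq_one_iff_dvd n).mp h
    rw [← Ico_add_one_right_eq_Icc, geom_sum_Ico hz (by omega), pow_succ, hzm, one_mul, pow_one,
      sub_self, zero_div]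

lemma sum_divisors_cc {m : ℕ} (hm : m ≠ 0) (n : ℕ) :
    ∑ d ∈ m.divisors, cc d n = if m ∣ n then (m : ℂ) else 0 := by
  have h := sum_Icc_eq_sum_divisors_sum_coprime (fun x : ℚ => exp (2 * Real.pi * I * x * n)) m
  have hterm : ∀ a d : ℕ,
      exp (2 * Real.pi * I * ((a / d : ℚ) : ℂ) * n) = exp (2 * Real.pi * I * a * n / d) := by
    intro a d
    push_cast
    ring_nf
  simp only [hterm] at h
  rw [← sum_Icc_exp_eq_ite hm n, h]
  refine Finset.sum_congr rfl fun d _ => ?_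
  rw [cc, Finset.sum_filter]

lemma cc_eq_sum_moebius {q : ℕ} (hq : q ≠ 0) (n : ℕ) :
    cc q n = ∑ x ∈ q.divisorsAntidiagonal, (μ x.1 : ℂ) * if x.2 ∣ n then (x.2 : ℂ) else 0 :=
  (sum_eq_iff_sum_mul_moebius_eq.mp (fun _ hm => sum_divisors_cc hm.ne' n) q
    (Nat.pos_of_ne_zero hq)).symm

lemma norm_cc_le {n : ℕ} (hn : n ≠ 0) (q : ℕ) : ‖cc q n‖ ≤ σ 1 n := by
  rcases eq_or_ne q 0 with rfl | hq
  · simp [cc]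
  have hterm : ∀ x ∈ q.divisorsAntidiagonal,
      ‖(μ x.1 : ℂ) * if x.2 ∣ n then (x.2 : ℂ) else 0‖ ≤ if x.2 ∣ n then (x.2 : ℝ) else 0 := by
    intro x _
    rw [norm_mul, Complex.norm_intCast]
    split_ifs
    · rw [Complex.norm_natCast]
      exact mul_le_of_le_one_left (Nat.cast_nonneg _) (mod_cast abs_moebius_le_one)
    · simp
  calc ‖cc q n‖ ≤ ∑ x ∈ q.divisorsAntidiagonal, if x.2 ∣ n then (x.2 : ℝ) else 0 := by
        rw [cc_eq_sum_moebius hq]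
        exact (norm_sum_le _ _).trans (Finset.sum_le_sum hterm)
    _ = ∑ d ∈ q.divisors with d ∣ n, (d : ℝ) := by
        rw [Nat.sum_divisorsAntidiagonal' (fun _ b => if b ∣ n then (b : ℝ) else 0),
          Finset.sum_filter]
    _ ≤ ∑ d ∈ n.divisors, (d : ℝ) := by
        refine Finset.sum_le_sum_of_subset_of_nonneg (fun d hd => ?_) fun _ _ _ => by positivity
        exact Nat.mem_divisors.mpr ⟨(Finset.mem_filter.mp hd).2, hn⟩
    _ = σ 1 n := by simp [sigma_one_apply]

lemma Nat.card_divisors_mul_le (a b : ℕ) : #(a * b).divisors ≤ #a.divisors * #b.divisors := by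
  rw [Nat.divisors_mul]
  exact Finset.card_mul_le

lemma sq_card_divisors_le (m : ℕ) : #m.divisors ^ 2 ≤ (σ 0 * σ 0) m := by
  rw [mul_apply, Nat.sum_divisorsAntidiagonal (fun a b => σ 0 a * σ 0 b), sq]
  refine Finset.card_nsmul_le_sum _ _ _ fun d hd => ?_
  rw [sigma_zero_apply, sigma_zero_apply]
  conv_lhs => rw [← Nat.mul_div_cancel' (Nat.dvd_of_mem_divisors hd)]
  exact Nat.card_divisors_mul_le _ _

lemma summable_card_divisors_sq_div_sq :
    Summable fun m : ℕ => (#m.divisors : ℝ) ^ 2 / (m : ℝ) ^ 2 := by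
  have hζ : LSeriesSummable ↗(ζ : ArithmeticFunction ℂ) 2 := by
    simpa using (LSeriesSummable_zeta_iff (s := 2)).mpr (by norm_num)
  have hσ : LSeriesSummable ↗((σ 0 * σ 0 : ArithmeticFunction ℕ) : ArithmeticFunction ℂ) 2 := by
    rw [natCoe_mul, ← zeta_mul_pow_eq_sigma, pow_zero_eq_zeta, natCoe_mul]
    exact LSeriesSummable_mul (LSeriesSummable_mul hζ hζ) (LSeriesSummable_mul hζ hζ)
  refine (summable_norm_iff.mpr hσ).of_nonneg_of_le (fun _ => by positivity) fun m => ?_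
  rw [norm_term_eq]
  rcases eq_or_ne m 0 with rfl | hm
  · simp
  · rw [if_neg hm, natCoe_apply, Complex.norm_natCast]
    simp only [Complex.re_ofNat, Real.rpow_two]
    gcongr
    exact_mod_cast sq_card_divisors_le m

lemma card_divisors_pow_div_pow_le {r s m : ℕ} (hm : m ≠ 0) (hr : r ≤ s) (hs : 2 ≤ s) :
    (#m.divisors : ℝ) ^ r / (m : ℝ) ^ s ≤ (#m.divisors : ℝ) ^ 2 / (m : ℝ) ^ 2 := by
  have hτ : (1 : ℝ) ≤ #m.divisors :=
    Nat.one_le_cast.mpr (Finset.card_pos.mpr ⟨1, Nat.one_mem_divisors.mpr hm⟩)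
  have hτm : (#m.divisors : ℝ) / m ≤ 1 :=
    div_le_one_of_le₀ (mod_cast Nat.card_divisors_le_self m) (Nat.cast_nonneg m)
  calc (#m.divisors : ℝ) ^ r / (m : ℝ) ^ s ≤ (#m.divisors : ℝ) ^ s / (m : ℝ) ^ s := by
        gcongr
    _ = ((#m.divisors : ℝ) / m) ^ s := (div_pow _ _ _).symm
    _ ≤ ((#m.divisors : ℝ) / m) ^ 2 := pow_le_pow_of_le_one (by positivity) hτm hs
    _ = (#m.divisors : ℝ) ^ 2 / (m : ℝ) ^ 2 := div_pow _ _ _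

lemma tsum_pnat_one_div_pow {s : ℕ} (hs : 1 < s) :
    ∑' m : ℕ+, 1 / ((m : ℕ) : ℂ) ^ s = riemannZeta s := by
  rw [zeta_nat_eq_tsum_of_gt_one hs,
    tsum_pnat_eq_tsum_of_eq_zero (f := fun m : ℕ => 1 / (m : ℂ) ^ s)]
  simp [Nat.ne_zero_of_lt hs]

lemma tsum_pnat_ite_dvd_one_div_pow {s : ℕ} (hs : 1 < s) (Q : ℕ+) :
    ∑' m : ℕ+, (if (Q : ℕ) ∣ m then 1 / ((m : ℕ) : ℂ) ^ s else 0) =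
      riemannZeta s / ((Q : ℕ) : ℂ) ^ s := by
  have hsupp : Function.support
      (fun m : ℕ+ => if (Q : ℕ) ∣ m then 1 / ((m : ℕ) : ℂ) ^ s else 0) ⊆ Set.range (Q * ·) := by
    intro m hm
    obtain ⟨t, rfl⟩ : Q ∣ m := PNat.dvd_iff.mpr (by by_contra h; simp [h] at hm)
    exact ⟨t, rfl⟩
  rw [← (mul_right_injective Q).tsum_eq hsupp, ← tsum_pnat_one_div_pow hs, div_eq_mul_inv,
    ← tsum_mul_right]
  refine tsum_congr fun t => ?_
  simp [mul_pow]

lemma tsum_pnat_ite_dvd_one {g : ℕ} (hg : g ≠ 0) :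
    ∑' m : ℕ+, (if (m : ℕ) ∣ g then (1 : ℂ) else 0) = #g.divisors := by
  rw [tsum_pnat_eq_tsum_of_eq_zero (f := fun m : ℕ => if m ∣ g then (1 : ℂ) else 0)
      (by simp [hg]),
    tsum_eq_sum (s := g.divisors) fun m hm => if_neg fun h => hm (Nat.mem_divisors.mpr ⟨h, hg⟩),
    Finset.sum_ite_of_true fun m hm => Nat.dvd_of_mem_divisors hm]
  simp

namespace PNat

def divisors (m : ℕ+) : Finset ℕ+ :=
  (m : ℕ).divisors.preimage (↑) PNat.coe_injective.injOn

lemma mem_divisors {m d : ℕ+} : d ∈ m.divisors ↔ (d : ℕ) ∣ m := by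
  simp [divisors, m.ne_zero]

lemma sum_divisors {M : Type*} [AddCommMonoid M] (m : ℕ+) (f : ℕ → M) :
    ∑ d ∈ m.divisors, f d = ∑ d ∈ (m : ℕ).divisors, f d :=
  Finset.sum_preimage _ _ _ f fun d hd hd' =>
    (hd' ⟨⟨d, Nat.pos_of_mem_divisors hd⟩, rfl⟩).elim

lemma card_divisors (m : ℕ+) : #m.divisors = #(m : ℕ).divisors := by
  simpa only [card_eq_sum_ones, Nat.cast_id] using m.sum_divisors (fun _ => 1)

end PNat

section DivisorTuples

variable {ι : Type*} [Fintype ι]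

lemma mem_piFinset_divisors [DecidableEq ι] {m : ℕ+} {q : ι → ℕ+} :
    q ∈ Fintype.piFinset (fun _ => m.divisors) ↔ ∀ i, (q i : ℕ) ∣ m := by
  simp [PNat.mem_divisors]

def divisorTupleTerm (a : (ι → ℕ+) → ℂ) (s : ℕ) (m : ℕ+) (q : ι → ℕ+) : ℂ :=
  if ∀ i, (q i : ℕ) ∣ m then a q / ((m : ℕ) : ℂ) ^ s else 0

variable (a : (ι → ℕ+) → ℂ) {s : ℕ} {C : ℝ}

lemma divisorTupleTerm_eq_zero [DecidableEq ι] {m : ℕ+} {q : ι → ℕ+}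
    (hq : q ∉ Fintype.piFinset fun _ => m.divisors) : divisorTupleTerm a s m q = 0 :=
  if_neg (mt mem_piFinset_divisors.mpr hq)

lemma tsum_divisorTupleTerm_right [DecidableEq ι] (m : ℕ+) :
    ∑' q, divisorTupleTerm a s m q =
      (∑ q ∈ Fintype.piFinset (fun _ => m.divisors), a q) / ((m : ℕ) : ℂ) ^ s := by
  rw [tsum_eq_sum fun q hq => divisorTupleTerm_eq_zero a hq, Finset.sum_div]
  exact Finset.sum_congr rfl fun q hq => if_pos (mem_piFinset_divisors.mp hq)

lemma tsum_divisorTupleTerm_left (hs : 1 < s) (q : ι → ℕ+) :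
    ∑' m, divisorTupleTerm a s m q =
      riemannZeta s * (a q / ((univ.lcm fun i => (q i : ℕ) : ℕ) : ℂ) ^ s) := by
  let Q : ℕ+ := ⟨univ.lcm fun i => (q i : ℕ), Nat.pos_of_ne_zero <| by
    simp [Finset.lcm_eq_zero_iff]⟩
  have hdvd : ∀ m : ℕ+, (∀ i, (q i : ℕ) ∣ m) ↔ (Q : ℕ) ∣ m := by
    simp [Q, Finset.lcm_dvd_iff]
  have hterm : ∀ m, divisorTupleTerm a s m q =
      a q * if (Q : ℕ) ∣ m then 1 / ((m : ℕ) : ℂ) ^ s else 0 := by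
    intro m
    simp only [divisorTupleTerm, hdvd, mul_ite, mul_one_div, mul_zero]
  rw [tsum_congr hterm, tsum_mul_left, tsum_pnat_ite_dvd_one_div_pow hs]
  simp only [Q, PNat.mk_coe]
  ring

lemma norm_divisorTupleTerm_le (ha : ∀ q, ‖a q‖ ≤ C) (m : ℕ+) (q : ι → ℕ+) :
    ‖divisorTupleTerm a s m q‖ ≤ C / ((m : ℕ) : ℝ) ^ s := by
  unfold divisorTupleTerm
  split_ifs
  · rw [norm_div, norm_pow, Complex.norm_natCast]
    gcongr
    exact ha q
  · rw [norm_zero]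
    exact div_nonneg ((norm_nonneg _).trans (ha q)) (by positivity)

lemma summable_divisorTupleTerm (ha : ∀ q, ‖a q‖ ≤ C) (hs : 2 ≤ s)
    (hι : Fintype.card ι ≤ s) :
    Summable (Function.uncurry (divisorTupleTerm a s)) := by
  classical
  refine Summable.of_norm <| (summable_prod_of_nonneg fun _ => norm_nonneg _).mpr
    ⟨fun m => summable_of_ne_finset_zero (s := Fintype.piFinset fun _ => m.divisors)
      fun q hq => ?_, ?_⟩
  · simp [divisorTupleTerm_eq_zero a hq]
  refine Summable.of_nonneg_of_le (fun _ => tsum_nonneg fun _ => norm_nonneg _) (fun m => ?_)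
    ((summable_card_divisors_sq_div_sq.comp_injective PNat.coe_injective).mul_left C)
  have hC : 0 ≤ C := (norm_nonneg _).trans (ha 1)
  calc ∑' q, ‖divisorTupleTerm a s m q‖
      = ∑ q ∈ Fintype.piFinset (fun _ => m.divisors), ‖divisorTupleTerm a s m q‖ :=
        tsum_eq_sum fun q hq => by simp [divisorTupleTerm_eq_zero a hq]
    _ ≤ ∑ q ∈ Fintype.piFinset (fun _ => m.divisors), C / ((m : ℕ) : ℝ) ^ s :=
        Finset.sum_le_sum fun q _ => norm_divisorTupleTerm_le a ha m q
    _ = C * ((#(m : ℕ).divisors : ℝ) ^ Fintype.card ι / ((m : ℕ) : ℝ) ^ s) := by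
        simp only [Finset.sum_const, Fintype.card_piFinset, PNat.card_divisors, Finset.prod_const,
          Finset.card_univ, nsmul_eq_mul]
        push_cast
        ring
    _ ≤ C * ((#(m : ℕ).divisors : ℝ) ^ 2 / ((m : ℕ) : ℝ) ^ 2) :=
        mul_le_mul_of_nonneg_left (card_divisors_pow_div_pow_le m.ne_zero hι hs) hC

end DivisorTuples

section LcmSeries

variable {ι : Type*} [Fintype ι] {a : (ι → ℕ+) → ℂ} {s : ℕ} {C : ℝ}

theorem summable_div_lcm_pow (ha : ∀ q, ‖a q‖ ≤ C) (hs : 2 ≤ s)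
    (hι : Fintype.card ι ≤ s) :
    Summable fun q => a q / ((univ.lcm fun i => (q i : ℕ) : ℕ) : ℂ) ^ s := by
  have h := (summable_divisorTupleTerm a ha hs hι).prod_symm.prod
  simp only [Function.uncurry, Prod.fst_swap, Prod.snd_swap,
    tsum_divisorTupleTerm_left a (by omega : 1 < s)] at h
  exact (summable_mul_left_iff (riemannZeta_ne_zero_of_one_lt_re (by simp; omega))).mp h

theorem riemannZeta_mul_tsum_div_lcm_pow [DecidableEq ι] (ha : ∀ q, ‖a q‖ ≤ C) (hs : 2 ≤ s)
    (hι : Fintype.card ι ≤ s) :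
    riemannZeta s * ∑' q, a q / ((univ.lcm fun i => (q i : ℕ) : ℕ) : ℂ) ^ s =
      ∑' m : ℕ+,
        (∑ q ∈ Fintype.piFinset (fun _ => m.divisors), a q) / ((m : ℕ) : ℂ) ^ s := by
  rw [← tsum_mul_left]
  simp_rw [← tsum_divisorTupleTerm_left a (by omega : 1 < s), ← tsum_divisorTupleTerm_right]
  exact (summable_divisorTupleTerm a ha hs hι).tsum_comm

end LcmSeries

lemma sum_piFinset_divisors_prod_cc {ι : Type*} [Fintype ι] [DecidableEq ι] (m : ℕ+)
    (n : ι → ℕ) :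
    ∑ q ∈ Fintype.piFinset (fun _ => m.divisors), ∏ i, cc (q i) (n i) =
      ∏ i, if (m : ℕ) ∣ n i then ((m : ℕ) : ℂ) else 0 := by
  simp only [← sum_divisors_cc m.ne_zero, ← PNat.sum_divisors m, Finset.prod_univ_sum]

theorem stmt17 (k : ℕ) (hk : 2 ≤ k) (n : Fin k → ℕ+) :
    Summable (fun q : Fin k → ℕ+ =>
      (∏ i, cc (q i) (n i)) / ((Finset.univ.lcm (fun i => ((q i : ℕ))) : ℕ) : ℂ) ^ k) ∧
    ((ArithmeticFunction.sigma 0 (Finset.univ.gcd (fun i => ((n i : ℕ)))) : ℕ) : ℂ)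
      = riemannZeta k *
          ∑' q : Fin k → ℕ+,
            (∏ i, cc (q i) (n i)) / ((Finset.univ.lcm (fun i => ((q i : ℕ))) : ℕ) : ℂ) ^ k := by
  have ha (q : Fin k → ℕ+) : ‖∏ i, cc (q i) (n i)‖ ≤ ∏ i, (σ 1 (n i) : ℝ) := by
    rw [norm_prod]
    exact Finset.prod_le_prod (fun _ _ => norm_nonneg _) fun i _ => norm_cc_le (n i).ne_zero _
  have hcard : Fintype.card (Fin k) ≤ k := (Fintype.card_fin k).le
  have hgcd : univ.gcd (fun i => (n i : ℕ)) ≠ 0 := fun h =>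
    (n ⟨0, by omega⟩).ne_zero (Finset.gcd_eq_zero_iff.mp h _ (mem_univ _))
  refine ⟨summable_div_lcm_pow ha hk hcard, ?_⟩
  rw [riemannZeta_mul_tsum_div_lcm_pow ha hk hcard, sigma_zero_apply,
    ← tsum_pnat_ite_dvd_one hgcd]
  refine tsum_congr fun m => ?_
  simp only [sum_piFinset_divisors_prod_cc, Finset.prod_ite_zero, Finset.dvd_gcd_iff, mem_univ,
    true_implies]
  split_ifs <;> simp [m.ne_zero]
end
end
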